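/- arXiv:2412.16580 — 3 statements merged into one kernel-verified Lean document; each statement's English description precedes it below -/
import Mathlib

section
/- Let (a_k)_{k≥1} be a real sequence with |a_k| ≤ C ρ^k for some C > 0 and ρ ∈ (0,1), normalized so that ∑_{k≥1} a_k = 1. Let f ∈ C^3(ℝ,ℝ) with bounded third derivative. Then there exists a constant C' > 0 such that for all h ∈ (0,1), the infinite-range discrete Laplacian Δ_{a,h} f := ∑_{k≥1} a_k (f(·+kh) - 2f + f(·-kh))/(k²h²) satisfies ‖Δ_{a,h} f - f''‖_{L^∞} ≤ C' h. -/
open scoped Nat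

/-! Adding the second-order Taylor expansions of `f (x + u)` and `f (x - u)` cancels the odd
terms, so the symmetric second difference quotient equals `f'' x` up to two Lagrange remainders,
an error of at most `M |u| / 3`. In the `k`-th term `u = k h` and `|a_k| ≤ C ρ ^ k`, so the errors
sum to at most `(C M h / 3) ∑ k ρ ^ k < ∞`, while `∑ a_k = 1` turns the weighted average of the
constant `f'' x` into `f'' x` itself. -/

theorem abs_sub_taylor_le_of_abs_iteratedDeriv_le {f : ℝ → ℝ} {n : ℕ} {M : ℝ}
    (hf : ContDiff ℝ (n + 1) f) (hM : ∀ y, |iteratedDeriv (n + 1) f y| ≤ M) (x₀ x : ℝ) :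
    |f x - ∑ k ∈ Finset.range (n + 1), iteratedDeriv k f x₀ * (x - x₀) ^ k / k !| ≤
      M * |x - x₀| ^ (n + 1) / (n + 1)! := by
  rcases eq_or_ne x₀ x with rfl | hx
  · simp [Finset.sum_range_succ']
  obtain ⟨ξ, -, hξ⟩ := taylor_mean_remainder_lagrange_iteratedDeriv hx hf.contDiffOn
  have htaylor : taylorWithinEval f n (Set.uIcc x₀ x) x₀ x =
      ∑ k ∈ Finset.range (n + 1), iteratedDeriv k f x₀ * (x - x₀) ^ k / k ! := by
    rw [taylor_within_apply]
    refine Finset.sum_congr rfl fun k hk => ?_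
    rw [iteratedDerivWithin_eq_iteratedDeriv (uniqueDiffOn_uIcc hx)
      (hf.contDiffAt.of_le ?_) Set.left_mem_uIcc, smul_eq_mul]
    · field_simp
    · exact_mod_cast (Finset.mem_range.1 hk).le
  rw [← htaylor, hξ, abs_div, abs_mul, abs_pow, abs_of_pos (by positivity : (0 : ℝ) < (n + 1)!)]
  gcongr
  exact hM ξ

theorem abs_secondDiffQuot_sub_iteratedDeriv_two_le {f : ℝ → ℝ} {M : ℝ} (hf : ContDiff ℝ 3 f)
    (hM : ∀ y, |iteratedDeriv 3 f y| ≤ M) (x : ℝ) {u : ℝ} (hu : u ≠ 0) :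
    |(f (x + u) - 2 * f x + f (x - u)) / u ^ 2 - iteratedDeriv 2 f x| ≤ M * |u| / 3 := by
  have hplus := abs_sub_taylor_le_of_abs_iteratedDeriv_le (n := 2) hf hM x (x + u)
  have hminus := abs_sub_taylor_le_of_abs_iteratedDeriv_le (n := 2) hf hM x (x - u)
  simp only [Finset.sum_range_succ, Finset.sum_range_zero, iteratedDeriv_zero, iteratedDeriv_one,
    add_sub_cancel_left, sub_sub_cancel_left, abs_neg] at hplus hminus
  norm_num [Nat.factorial] at hplus hminus
  have hsecondDiff : |f (x + u) - 2 * f x + f (x - u) - u ^ 2 * iteratedDeriv 2 f x| ≤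
      M * |u| ^ 3 / 3 :=
    calc _ = |(f (x + u) - (f x + deriv f x * u + iteratedDeriv 2 f x * u ^ 2 / 2)) +
          (f (x - u) - (f x + -(deriv f x * u) + iteratedDeriv 2 f x * u ^ 2 / 2))| := by ring_nf
      _ ≤ _ := (abs_add_le _ _).trans (by linarith)
  have hu2 : 0 < u ^ 2 := by positivity
  rw [div_sub' hu2.ne', abs_div, abs_of_pos hu2, div_le_iff₀ hu2]
  calc _ = |f (x + u) - 2 * f x + f (x - u) - u ^ 2 * iteratedDeriv 2 f x| := by ring_nf
    _ ≤ M * |u| ^ 3 / 3 := hsecondDiff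
    _ = M * |u| / 3 * u ^ 2 := by rw [← sq_abs u]; ring

theorem abs_tsum_mul_sub_le {w b B : ℕ → ℝ} {c : ℝ} (hw : ∑' k, w k = 1) (hB : Summable B)
    (hbound : ∀ k, |w k| * |b k - c| ≤ B k) : |∑' k, w k * b k - c| ≤ ∑' k, B k := by
  have hw_summable : Summable w := by
    by_contra hns
    simp [tsum_eq_zero_of_not_summable hns] at hw
  have herr : Summable fun k => w k * (b k - c) :=
    hB.of_norm_bounded fun k => by simpa only [norm_mul, Real.norm_eq_abs] using hbound k
  have hsplit : ∑' k, w k * b k - c = ∑' k, w k * (b k - c) :=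
    calc ∑' k, w k * b k - c = ∑' k, (w k * (b k - c) + w k * c) - c := by
          simp only [mul_sub, sub_add_cancel]
      _ = ∑' k, w k * (b k - c) := by
          rw [herr.tsum_add (hw_summable.mul_right c), tsum_mul_right, hw, one_mul,
            add_sub_cancel_right]
  rw [hsplit]
  calc |∑' k, w k * (b k - c)| ≤ ∑' k, |w k * (b k - c)| := by
        simpa only [Real.norm_eq_abs] using norm_tsum_le_tsum_norm herr.norm
    _ ≤ ∑' k, B k := herr.abs.tsum_le_tsum (fun k => (abs_mul _ _).trans_le (hbound k)) hB

theorem summable_succ_mul_pow_succ {ρ : ℝ} (hρ : |ρ| < 1) :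
    Summable fun k : ℕ => ((k + 1 : ℕ) : ℝ) * ρ ^ (k + 1) := by
  have h := summable_pow_mul_geometric_of_norm_lt_one 1 (r := ρ) (by rwa [Real.norm_eq_abs])
  simp only [pow_one] at h
  exact (summable_nat_add_iff 1).2 h

theorem infinite_range_laplacian_consistency
    (a : ℕ → ℝ) (C ρ : ℝ) (hC : 0 < C) (hρ : ρ ∈ Set.Ioo (0 : ℝ) 1)
    (ha : ∀ k : ℕ, 1 ≤ k → |a k| ≤ C * ρ ^ k)
    (hsum : ∑' k : ℕ, a (k + 1) = 1)
    (f : ℝ → ℝ) (M : ℝ) (hf : ContDiff ℝ 3 f)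
    (hM : ∀ y : ℝ, |iteratedDeriv 3 f y| ≤ M) :
    ∃ C' > 0, ∀ h ∈ Set.Ioo (0 : ℝ) 1, ∀ x : ℝ,
      |(∑' k : ℕ, a (k + 1) *
          (f (x + (k + 1) * h) - 2 * f x + f (x - (k + 1) * h)) / ((k + 1) ^ 2 * h ^ 2))
        - iteratedDeriv 2 f x| ≤ C' * h := by
  obtain ⟨hρ0, hρ1⟩ := hρ
  have hM0 : 0 ≤ M := (abs_nonneg _).trans (hM 0)
  have hS := summable_succ_mul_pow_succ (ρ := ρ) (by rwa [abs_of_pos hρ0])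
  set S := ∑' k : ℕ, ((k + 1 : ℕ) : ℝ) * ρ ^ (k + 1)
  have hS0 : 0 ≤ S := tsum_nonneg fun k => by positivity
  refine ⟨C * M * S / 3 + 1, by positivity, ?_⟩
  rintro h ⟨hh0, -⟩ x
  have hterm : ∀ k : ℕ, |a (k + 1)| *
      |(f (x + (k + 1) * h) - 2 * f x + f (x - (k + 1) * h)) / ((k + 1) ^ 2 * h ^ 2) -
        iteratedDeriv 2 f x| ≤ C * M * h / 3 * (((k + 1 : ℕ) : ℝ) * ρ ^ (k + 1)) := by
    intro k
    have hu : 0 < ((k : ℝ) + 1) * h := by positivity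
    have hquot := abs_secondDiffQuot_sub_iteratedDeriv_two_le hf hM x hu.ne'
    rw [mul_pow, abs_of_pos hu] at hquot
    calc _ ≤ C * ρ ^ (k + 1) * (M * (((k : ℝ) + 1) * h) / 3) :=
          mul_le_mul (ha _ k.succ_pos) hquot (abs_nonneg _) (by positivity)
      _ = _ := by push_cast; ring
  calc _ = |∑' k : ℕ, a (k + 1) * ((f (x + (k + 1) * h) - 2 * f x + f (x - (k + 1) * h)) /
        ((k + 1) ^ 2 * h ^ 2)) - iteratedDeriv 2 f x| := by simp only [mul_div_assoc]
    _ ≤ ∑' k : ℕ, C * M * h / 3 * (((k + 1 : ℕ) : ℝ) * ρ ^ (k + 1)) :=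
        abs_tsum_mul_sub_le hsum (hS.mul_left _) hterm
    _ = C * M * S / 3 * h := by rw [tsum_mul_left]; ring
    _ ≤ (C * M * S / 3 + 1) * h := by gcongr; linarith
end

section
/- Let f ∈ W^{3,∞}(ℝ) be real-valued and v ∈ L²(ℝ), k ≥ 1, h > 0. Then (1/(kh))·((∂⁺_{kh} f)·v(·+kh) - (∂⁻_{kh} f)·v(·-kh)) = 2 f'·∂⁰_{kh} v + f''·M⁰_{kh} v + R, where R := (1/(k²h²))·(v(·+kh)·T_{3,f}(·,kh) + v(·-kh)·T_{3,f}(·,-kh)) satisfies ‖R‖_{L²} ≤ kh‖f‖_{W^{3,∞}}‖v‖_{L²}. -/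
open MeasureTheory Real

/-!
The identity is pure algebra once `f (x ± c)` (`c = k h`) are written as their second-order
Taylor polynomials plus the remainders `T_{3,f}(x, ±c)`. By Taylor's theorem with Lagrange
remainder, `|T_{3,f}(x, ±c)| ≤ ‖f⁽³⁾‖_∞ c³ / 6`, so pointwise
`|R x| ≤ (c ‖f⁽³⁾‖_∞ / 6) (|v (x + c)| + |v (x - c)|)`, and Minkowski's inequality together
with the translation invariance of the `L²` norm gives `‖R‖₂ ≤ (c ‖f⁽³⁾‖_∞ / 3) ‖v‖₂`.
-/

open Set Finset in
theorem abs_sub_taylor_le {f : ℝ → ℝ} {n : ℕ} {C : ℝ} (hf : ContDiff ℝ (n + 1) f)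
    (hC : ∀ y, |iteratedDeriv (n + 1) f y| ≤ C) (x t : ℝ) :
    |f (x + t) - ∑ i ∈ range (n + 1), iteratedDeriv i f x * t ^ i / i.factorial|
      ≤ C * |t| ^ (n + 1) / (n + 1).factorial := by
  rcases eq_or_ne t 0 with rfl | ht
  · simp [Finset.sum_range_succ', zero_pow]
  have hx : x ≠ x + t := fun h => ht (by linarith)
  obtain ⟨y, -, hy⟩ := taylor_mean_remainder_lagrange_iteratedDeriv hx hf.contDiffOn
  have htaylor : taylorWithinEval f n (uIcc x (x + t)) x (x + t)
      = ∑ i ∈ range (n + 1), iteratedDeriv i f x * t ^ i / i.factorial := by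
    rw [taylor_within_apply]
    refine Finset.sum_congr rfl fun i hi => ?_
    rw [iteratedDerivWithin_eq_iteratedDeriv (uniqueDiffOn_uIcc hx)
      (hf.contDiffAt.of_le (by exact_mod_cast (mem_range.mp hi).le)) left_mem_uIcc]
    simp only [add_sub_cancel_left, smul_eq_mul]
    field_simp
  rw [← htaylor, hy, add_sub_cancel_left, abs_div, abs_mul, abs_pow, Nat.abs_cast]
  gcongr
  exact hC y

/-- The paper's `T_{3,f}(x, s)`. -/
noncomputable def taylorRemainder3 (f : ℝ → ℝ) (x s : ℝ) : ℝ :=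
  f (x + s) - f x - deriv f x * s - iteratedDeriv 2 f x * s ^ 2 / 2

theorem abs_taylorRemainder3_le {f : ℝ → ℝ} {C : ℝ} (hf : ContDiff ℝ 3 f)
    (hC : ∀ y, |iteratedDeriv 3 f y| ≤ C) (x s : ℝ) :
    |taylorRemainder3 f x s| ≤ C * |s| ^ 3 / 6 := by
  have := abs_sub_taylor_le (n := 2) hf hC x s
  simp only [Finset.sum_range_succ, Finset.sum_range_zero, iteratedDeriv_zero,
    iteratedDeriv_one] at this
  convert this using 2
  · simp only [taylorRemainder3, Nat.factorial]; push_cast; ring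
  · norm_num [Nat.factorial]

theorem abs_symmetric_taylorRemainder3_le {f : ℝ → ℝ} {C : ℝ} (hf : ContDiff ℝ 3 f)
    (hC : ∀ y, |iteratedDeriv 3 f y| ≤ C) {c : ℝ} (hc : 0 < c) (x a b : ℝ) :
    |1 / c ^ 2 * (a * taylorRemainder3 f x c + b * taylorRemainder3 f x (-c))|
      ≤ c * C / 6 * (|a| + |b|) := by
  have hT : ∀ s, |s| = c → |taylorRemainder3 f x s| ≤ C * c ^ 3 / 6 := fun s hs => by
    simpa [hs] using abs_taylorRemainder3_le hf hC x s
  calc |1 / c ^ 2 * (a * taylorRemainder3 f x c + b * taylorRemainder3 f x (-c))|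
      ≤ 1 / c ^ 2 * (|a| * |taylorRemainder3 f x c| + |b| * |taylorRemainder3 f x (-c)|) := by
        rw [abs_mul, abs_of_pos (by positivity), ← abs_mul, ← abs_mul]
        gcongr
        exact abs_add_le _ _
    _ ≤ 1 / c ^ 2 * (|a| * (C * c ^ 3 / 6) + |b| * (C * c ^ 3 / 6)) := by
        gcongr
        · exact hT c (abs_of_pos hc)
        · exact hT (-c) (by rw [abs_neg, abs_of_pos hc])
    _ = c * C / 6 * (|a| + |b|) := by field_simp

theorem eLpNorm_le_of_norm_le_translates {G E F : Type*} [AddGroup G] [MeasurableSpace G]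
    [MeasurableAdd G] {μ : Measure G} [μ.IsAddRightInvariant] [NormedAddCommGroup E]
    [NormedAddCommGroup F] {p : ENNReal} (hp : 1 ≤ p) {v : G → E}
    (hv : AEStronglyMeasurable v μ) {R : G → F} {K : ℝ} (a b : G)
    (hR : ∀ x, ‖R x‖ ≤ K * (‖v (x + a)‖ + ‖v (x - b)‖)) :
    eLpNorm R p μ ≤ ENNReal.ofReal (2 * K) * eLpNorm v p μ := by
  have ha := measurePreserving_add_right μ a
  have hb := measurePreserving_sub_right μ b
  have hsum : eLpNorm (fun x => ‖v (x + a)‖ + ‖v (x - b)‖) p μ ≤ 2 * eLpNorm v p μ := by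
    calc eLpNorm (fun x => ‖v (x + a)‖ + ‖v (x - b)‖) p μ
        ≤ eLpNorm (fun x => ‖v (x + a)‖) p μ + eLpNorm (fun x => ‖v (x - b)‖) p μ :=
          eLpNorm_add_le (hv.comp_measurePreserving ha).norm
            (hv.comp_measurePreserving hb).norm hp
      _ = 2 * eLpNorm v p μ := by
          rw [eLpNorm_norm, eLpNorm_norm, two_mul]
          exact congr_arg₂ (· + ·) (eLpNorm_comp_measurePreserving hv ha)
            (eLpNorm_comp_measurePreserving hv hb)
  calc eLpNorm R p μ
      ≤ ENNReal.ofReal K * eLpNorm (fun x => ‖v (x + a)‖ + ‖v (x - b)‖) p μ :=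
        eLpNorm_le_mul_eLpNorm_of_ae_le_mul (Filter.Eventually.of_forall fun x => by
          rw [Real.norm_of_nonneg (by positivity)]; exact hR x) p
    _ ≤ ENNReal.ofReal K * (2 * eLpNorm v p μ) := by gcongr
    _ = ENNReal.ofReal (2 * K) * eLpNorm v p μ := by
        rw [ENNReal.ofReal_mul zero_le_two, ENNReal.ofReal_ofNat]; ring

theorem unbalanced_difference_identity_and_bound
    (f : ℝ → ℝ) (F : ℝ) (hf : ContDiff ℝ 3 f)
    (hF : ∀ x : ℝ, |f x| ≤ F ∧ |deriv f x| ≤ F ∧ |iteratedDeriv 2 f x| ≤ F ∧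
      |iteratedDeriv 3 f x| ≤ F)
    (v : ℝ → ℝ) (hv : MemLp v 2 (volume : Measure ℝ))
    (k : ℕ) (hk : 1 ≤ k) (h : ℝ) (hh : 0 < h) :
    (∀ x : ℝ,
      (1 / (k * h)) * (((f (x + k * h) - f x) / (k * h)) * v (x + k * h)
          - ((f x - f (x - k * h)) / (k * h)) * v (x - k * h))
      = 2 * deriv f x * ((v (x + k * h) - v (x - k * h)) / (2 * k * h))
        + iteratedDeriv 2 f x * ((v (x + k * h) + v (x - k * h)) / 2)
        + (1 / ((k : ℝ) ^ 2 * h ^ 2)) *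
            (v (x + k * h) *
              (f (x + k * h) - f x - deriv f x * (k * h)
                - iteratedDeriv 2 f x * (k * h) ^ 2 / 2)
             + v (x - k * h) *
              (f (x - k * h) - f x - deriv f x * (-(k * h))
                - iteratedDeriv 2 f x * (-(k * h)) ^ 2 / 2)))
    ∧ eLpNorm (fun x => (1 / ((k : ℝ) ^ 2 * h ^ 2)) *
            (v (x + k * h) *
              (f (x + k * h) - f x - deriv f x * (k * h)
                - iteratedDeriv 2 f x * (k * h) ^ 2 / 2)
             + v (x - k * h) *
              (f (x - k * h) - f x - deriv f x * (-(k * h))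
                - iteratedDeriv 2 f x * (-(k * h)) ^ 2 / 2))) 2 volume
      ≤ ENNReal.ofReal (k * h * F) * eLpNorm v 2 volume := by
  have hc : (0 : ℝ) < k * h := mul_pos (by exact_mod_cast hk) hh
  refine ⟨fun x => by field_simp; ring, ?_⟩
  have hC : ∀ y, |iteratedDeriv 3 f y| ≤ F := fun y => (hF y).2.2.2
  have hF0 : 0 ≤ F := (abs_nonneg _).trans (hC 0)
  rw [← mul_pow]
  calc _ ≤ ENNReal.ofReal (2 * (k * h * F / 6)) * eLpNorm v 2 volume :=
        eLpNorm_le_of_norm_le_translates one_le_two hv.aestronglyMeasurable (k * h) (k * h)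
          fun x => abs_symmetric_taylorRemainder3_le hf hC hc x _ _
    _ ≤ ENNReal.ofReal (k * h * F) * eLpNorm v 2 volume := by
        gcongr ?_ * _
        exact ENNReal.ofReal_le_ofReal (by linarith [mul_nonneg hc.le hF0])
end

section
/- Let g₀ > 0, c > 2√g₀, κ₀ := c/2 - √(c²/4 - g₀), and let (a_k) satisfy the geometric decay and normalization assumptions. Define G(h,κ) := g₀ - cκ + ∑_{k≥1} a_k (e^{-κkh} - 2 + e^{κkh})/(k²h²) for h > 0, extended at h = 0 by G(0,κ) := g₀ - cκ + κ². Then G(0,κ₀) = 0 and ∂_κ G(0, κ₀) = 2κ₀ - c < 0; consequently, by the implicit function theorem (with G of class C¹ near (0,κ₀) when the h-variable is replaced by h² or a suitable smooth parametrization), there exist h₀ > 0 and a function κ : (0,h₀) → ℝ with G(h, κ(h)) = 0 for all h ∈ (0,h₀) and κ(h) → κ₀ as h → 0. -/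
/-!
Since `exp (-x) - 2 + exp x = 4 sinh² (x / 2)` lies between `x²` and `x² exp |x|`, the `k`-th
summand of `G h κ` differs from `a (k + 1) κ²` by at most
`|a (k + 1)| κ² (exp (|κ| (k + 1) |h|) - 1)`, and is bounded by `C M² (ρ exp (M |h|)) ^ (k + 1)`
for `|κ| ≤ M`. For small `h` these bounds are geometric, so dominated convergence gives
`G h κ → G0 κ` pointwise as `h → 0`, and the Weierstrass test makes `G h` continuous in `κ`.
As `G0 (κ₀ - t) > 0 > G0 (κ₀ + t)` for small `t > 0`, the intermediate value theorem yields, for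
all small `h`, a zero of `G h` within `t` of `κ₀`; choosing an almost closest zero gives `κf`.
-/

open Real Filter Set Metric Topology

lemma exp_neg_sub_two_add_exp_eq (x : ℝ) : exp (-x) - 2 + exp x = 4 * sinh (x / 2) ^ 2 := by
  have h₁ : exp x = exp (x / 2) ^ 2 := by rw [sq, ← exp_add, add_halves]
  have h₂ : exp (-x) = exp (-(x / 2)) ^ 2 := by rw [sq, ← exp_add]; ring_nf
  have h₃ : exp (x / 2) * exp (-(x / 2)) = 1 := by rw [← exp_add, add_neg_cancel, exp_zero]
  rw [sinh_eq, h₁, h₂]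
  linear_combination 2 * h₃

lemma sinh_le_mul_exp (y : ℝ) : sinh y ≤ y * exp y := by
  have h₁ := add_one_le_exp (-2 * y)
  have h₂ : exp y * exp (-2 * y) = exp (-y) := by rw [← exp_add]; ring_nf
  rw [sinh_eq]
  nlinarith [exp_pos y]

lemma sq_le_exp_neg_sub_two_add_exp (x : ℝ) : x ^ 2 ≤ exp (-x) - 2 + exp x := by
  rw [exp_neg_sub_two_add_exp_eq, ← sq_abs (sinh _), abs_sinh]
  calc x ^ 2 = 4 * |x / 2| ^ 2 := by rw [sq_abs]; ring
    _ ≤ 4 * sinh |x / 2| ^ 2 := by gcongr; exact self_le_sinh_iff.2 (abs_nonneg _)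

lemma exp_neg_sub_two_add_exp_le (x : ℝ) : exp (-x) - 2 + exp x ≤ x ^ 2 * exp |x| := by
  rw [exp_neg_sub_two_add_exp_eq, ← sq_abs (sinh _), abs_sinh]
  have hexp : exp |x / 2| ^ 2 = exp |x| := by
    rw [← exp_nat_mul, abs_div, abs_two]; push_cast; ring_nf
  calc 4 * sinh |x / 2| ^ 2 ≤ 4 * (|x / 2| * exp |x / 2|) ^ 2 := by
        gcongr
        exact sinh_le_mul_exp _
    _ = x ^ 2 * exp |x| := by rw [mul_pow, hexp, sq_abs]; ring

lemma abs_exp_neg_sub_two_add_exp_div_sq_sub_le (κ : ℝ) {s : ℝ} (hs : s ≠ 0) :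
    |(exp (-κ * s) - 2 + exp (κ * s)) / s ^ 2 - κ ^ 2| ≤ κ ^ 2 * (exp (|κ| * |s|) - 1) := by
  have hs2 : 0 < s ^ 2 := by positivity
  have hlo := sq_le_exp_neg_sub_two_add_exp (κ * s)
  have hup := exp_neg_sub_two_add_exp_le (κ * s)
  rw [← neg_mul, mul_pow] at hlo hup
  rw [abs_mul] at hup
  have hsplit : (exp (-κ * s) - 2 + exp (κ * s)) / s ^ 2 - κ ^ 2
      = (exp (-κ * s) - 2 + exp (κ * s) - κ ^ 2 * s ^ 2) / s ^ 2 := by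
    field_simp
  rw [hsplit, abs_of_nonneg (div_nonneg (by linarith) hs2.le), div_le_iff₀ hs2]
  linarith

noncomputable def secondDiffTerm (a : ℕ → ℝ) (h κ : ℝ) (k : ℕ) : ℝ :=
  a (k + 1) * (exp (-κ * ((k + 1) * h)) - 2 + exp (κ * ((k + 1) * h))) /
    (((k : ℝ) + 1) ^ 2 * h ^ 2)

lemma abs_secondDiffTerm_sub_le (a : ℕ → ℝ) (κ : ℝ) {h : ℝ} (hh : h ≠ 0) (k : ℕ) :
    |secondDiffTerm a h κ k - a (k + 1) * κ ^ 2|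
      ≤ |a (k + 1)| * κ ^ 2 * (exp (|κ| * ((k + 1) * |h|)) - 1) := by
  have hs : ((k : ℝ) + 1) * h ≠ 0 := mul_ne_zero (by positivity) hh
  have key := abs_exp_neg_sub_two_add_exp_div_sq_sub_le κ hs
  rw [abs_mul, abs_of_pos (by positivity : (0 : ℝ) < k + 1), mul_pow] at key
  rw [secondDiffTerm, mul_div_assoc, ← mul_sub, abs_mul, mul_assoc]
  gcongr

lemma tendsto_secondDiffTerm (a : ℕ → ℝ) (κ : ℝ) (k : ℕ) :
    Tendsto (fun h => secondDiffTerm a h κ k) (𝓝[≠] 0) (𝓝 (a (k + 1) * κ ^ 2)) := by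
  have hbound : Tendsto (fun h : ℝ => |a (k + 1)| * κ ^ 2 * (exp (|κ| * ((k + 1) * |h|)) - 1))
      (𝓝[≠] 0) (𝓝 0) :=
    tendsto_nhdsWithin_of_tendsto_nhds (Continuous.tendsto' (by fun_prop) 0 0 (by simp))
  refine tendsto_iff_norm_sub_tendsto_zero.2 (squeeze_zero_norm' ?_ hbound)
  filter_upwards [self_mem_nhdsWithin] with h hh
  rw [norm_norm]
  exact abs_secondDiffTerm_sub_le a κ hh k

lemma abs_secondDiffTerm_le {a : ℕ → ℝ} {C ρ : ℝ} (ha : ∀ k : ℕ, 1 ≤ k → |a k| ≤ C * ρ ^ k)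
    {h η κ M : ℝ} (hh : h ≠ 0) (hη : |h| ≤ η) (hκ : |κ| ≤ M) (k : ℕ) :
    |secondDiffTerm a h κ k| ≤ C * M ^ 2 * (ρ * exp (M * η)) ^ (k + 1) := by
  have hak := ha (k + 1) (by omega)
  have hκ2 : κ ^ 2 ≤ M ^ 2 := by rw [← sq_abs]; gcongr
  have hexp : exp (|κ| * ((k + 1) * |h|)) ≤ exp (M * η) ^ (k + 1) := by
    rw [← exp_nat_mul, exp_le_exp]
    have hM : 0 ≤ M := (abs_nonneg κ).trans hκ
    calc |κ| * ((k + 1) * |h|) ≤ M * ((k + 1) * η) := by gcongr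
      _ = ((k + 1 : ℕ) : ℝ) * (M * η) := by push_cast; ring
  have hdiff := abs_secondDiffTerm_sub_le a κ hh k
  calc |secondDiffTerm a h κ k|
      ≤ |a (k + 1)| * κ ^ 2 * (exp (|κ| * ((k + 1) * |h|)) - 1) + |a (k + 1)| * κ ^ 2 := by
        have hy : |a (k + 1) * κ ^ 2| = |a (k + 1)| * κ ^ 2 := by rw [abs_mul, abs_sq]
        linarith [abs_sub_abs_le_abs_sub (secondDiffTerm a h κ k) (a (k + 1) * κ ^ 2)]
    _ = |a (k + 1)| * κ ^ 2 * exp (|κ| * ((k + 1) * |h|)) := by ring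
    _ ≤ C * ρ ^ (k + 1) * M ^ 2 * exp (M * η) ^ (k + 1) := by
        have hCρ : 0 ≤ C * ρ ^ (k + 1) := (abs_nonneg _).trans hak
        gcongr
    _ = C * M ^ 2 * (ρ * exp (M * η)) ^ (k + 1) := by ring

section Series

variable {a : ℕ → ℝ} {C ρ : ℝ}

lemma eventually_mul_exp_mul_abs_lt_one (hρ : ρ < 1) (M : ℝ) :
    ∀ᶠ h in 𝓝 (0 : ℝ), ρ * exp (M * |h|) < 1 :=
  (Continuous.tendsto' (by fun_prop) 0 ρ (by simp)).eventually_lt_const hρ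

lemma summable_bound_secondDiffTerm (hρ : 0 ≤ ρ) {M η : ℝ} (hq : ρ * exp (M * η) < 1) :
    Summable fun k : ℕ => C * M ^ 2 * (ρ * exp (M * η)) ^ (k + 1) :=
  ((summable_nat_add_iff 1).2 (summable_geometric_of_lt_one (by positivity) hq)).mul_left _

lemma tendsto_tsum_secondDiffTerm (ha : ∀ k : ℕ, 1 ≤ k → |a k| ≤ C * ρ ^ k) (hρ₀ : 0 ≤ ρ)
    (hρ₁ : ρ < 1) (hsum : ∑' k : ℕ, a (k + 1) = 1) (κ : ℝ) :
    Tendsto (fun h => ∑' k, secondDiffTerm a h κ k) (𝓝[≠] 0) (𝓝 (κ ^ 2)) := by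
  obtain ⟨η, hq, hη⟩ := ((eventually_nhdsWithin_of_eventually_nhds (s := {0}ᶜ)
    (eventually_mul_exp_mul_abs_lt_one hρ₁ (|κ|))).and self_mem_nhdsWithin).exists
  have hsmall : ∀ᶠ h in 𝓝[≠] (0 : ℝ), |h| ≤ |η| := by
    filter_upwards [nhdsWithin_le_nhds (closedBall_mem_nhds (0 : ℝ) (abs_pos.2 hη))] with h hh
    simpa using hh
  have hlim := tendsto_tsum_of_dominated_convergence (summable_bound_secondDiffTerm hρ₀ hq)
    (tendsto_secondDiffTerm a κ) (by
      filter_upwards [self_mem_nhdsWithin, hsmall] with h hh hhη k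
      exact abs_secondDiffTerm_le ha hh hhη le_rfl k)
  rwa [tsum_mul_right, hsum, one_mul] at hlim

lemma eventually_continuousOn_tsum_secondDiffTerm (ha : ∀ k : ℕ, 1 ≤ k → |a k| ≤ C * ρ ^ k)
    (hρ₀ : 0 ≤ ρ) (hρ₁ : ρ < 1) (M : ℝ) :
    ∀ᶠ h in 𝓝[≠] 0, ContinuousOn (fun κ => ∑' k, secondDiffTerm a h κ k) (Icc (-M) M) := by
  filter_upwards [self_mem_nhdsWithin,
    eventually_nhdsWithin_of_eventually_nhds (eventually_mul_exp_mul_abs_lt_one hρ₁ M)]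
    with h hh hq
  exact continuousOn_tsum (fun k => by unfold secondDiffTerm; fun_prop)
    (summable_bound_secondDiffTerm hρ₀ hq)
    (fun k κ hκ => abs_secondDiffTerm_le ha hh le_rfl (abs_le.2 hκ) k)

end Series

lemma eventually_exists_zero_of_tendsto {α : Type*} {l : Filter α} {F : α → ℝ → ℝ}
    {a b ya yb : ℝ} (hab : a ≤ b) (hcont : ∀ᶠ h in l, ContinuousOn (F h) (Icc a b))
    (ha : Tendsto (F · a) l (𝓝 ya)) (hb : Tendsto (F · b) l (𝓝 yb)) (hya : 0 < ya)
    (hyb : yb < 0) :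
    ∀ᶠ h in l, ∃ κ ∈ Icc a b, F h κ = 0 := by
  filter_upwards [hcont, ha.eventually_const_lt hya, hb.eventually_lt_const hyb]
    with h hc hpos hneg
  exact intermediate_value_Icc' hab hc ⟨hneg.le, hpos.le⟩

lemma eventually_exists_zero_near_of_tendsto_sq {α : Type*} {l : Filter α} {S : α → ℝ → ℝ}
    {c g₀ : ℝ} (hg₀ : g₀ < c ^ 2 / 4) (hS : ∀ κ, Tendsto (S · κ) l (𝓝 (κ ^ 2)))
    (hcont : ∀ M, ∀ᶠ h in l, ContinuousOn (S h) (Icc (-M) M)) {ε : ℝ} (hε : 0 < ε) :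
    ∀ᶠ h in l, ∃ κ, g₀ - c * κ + S h κ = 0 ∧ dist κ (c / 2 - √(c ^ 2 / 4 - g₀)) ≤ ε := by
  set r := √(c ^ 2 / 4 - g₀)
  have hr : 0 < r := sqrt_pos.2 (by linarith)
  have hr2 : r ^ 2 = c ^ 2 / 4 - g₀ := sq_sqrt (by linarith)
  set κ₀ := c / 2 - r
  set t := min ε r
  have ht : 0 < t := lt_min hε hr
  have htr : t ≤ r := min_le_right ε r
  have hsub : Icc (κ₀ - t) (κ₀ + t) ⊆ Icc (-(|κ₀| + r)) (|κ₀| + r) :=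
    Icc_subset_Icc (by linarith [neg_abs_le κ₀]) (by linarith [le_abs_self κ₀])
  have hleft : 0 < g₀ - c * (κ₀ - t) + (κ₀ - t) ^ 2 := by
    have : g₀ - c * (κ₀ - t) + (κ₀ - t) ^ 2 = t * (t + 2 * r) := by linear_combination hr2
    rw [this]; positivity
  have hright : g₀ - c * (κ₀ + t) + (κ₀ + t) ^ 2 < 0 := by
    have : g₀ - c * (κ₀ + t) + (κ₀ + t) ^ 2 = t * (t - 2 * r) := by linear_combination hr2
    rw [this]; nlinarith
  have hcont' : ∀ᶠ h in l, ContinuousOn (fun κ => g₀ - c * κ + S h κ) (Icc (κ₀ - t) (κ₀ + t)) :=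
    (hcont (|κ₀| + r)).mono fun h hh =>
      (continuous_const.sub (continuous_const_mul c)).continuousOn.add (hh.mono hsub)
  filter_upwards [eventually_exists_zero_of_tendsto (by linarith) hcont'
    (tendsto_const_nhds.add (hS _)) (tendsto_const_nhds.add (hS _)) hleft hright]
    with h ⟨κ, hκ, hzero⟩
  refine ⟨κ, hzero, ?_⟩
  rw [Real.dist_eq, abs_le]
  constructor <;> linarith [hκ.1, hκ.2, min_le_left ε r]

lemma exists_tendsto_of_eventually_exists_near {α : Type*} [PseudoMetricSpace α] {a : ℝ}
    {S : ℝ → Set α} {x₀ : α} (hS : ∀ ε > 0, ∀ᶠ h in 𝓝[>] a, ∃ x ∈ S h, dist x x₀ ≤ ε) :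
    ∃ b > a, ∃ f : ℝ → α, (∀ h ∈ Ioo a b, f h ∈ S h) ∧ Tendsto f (𝓝[>] a) (𝓝 x₀) := by
  obtain ⟨b, hab, hsub⟩ := mem_nhdsGT_iff_exists_Ioo_subset.1 (hS 1 one_pos)
  -- the slack `h - a` makes an almost closest point exist and vanishes in the limit
  have hnear : ∀ h, ∃ x, a < h → (S h).Nonempty →
      x ∈ S h ∧ dist x₀ x < infDist x₀ (S h) + (h - a) := by
    intro h
    by_cases H : a < h ∧ (S h).Nonempty
    · obtain ⟨x, hx, hdist⟩ := (infDist_lt_iff H.2).1 (lt_add_of_pos_right _ (sub_pos.2 H.1))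
      exact ⟨x, fun _ _ => ⟨hx, hdist⟩⟩
    · exact ⟨x₀, fun h₁ h₂ => absurd ⟨h₁, h₂⟩ H⟩
  choose f hf using hnear
  refine ⟨b, hab, f, fun h hh => (hf h hh.1 ?_).1, ?_⟩
  · obtain ⟨x, hx, -⟩ := hsub hh
    exact ⟨x, hx⟩
  rw [Metric.tendsto_nhds]
  intro ε hε
  filter_upwards [hS (ε / 2) (half_pos hε), Ioo_mem_nhdsGT (by linarith : a < a + ε / 2)]
    with h ⟨x, hx, hxd⟩ hh
  have hfh := (hf h hh.1 ⟨x, hx⟩).2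
  have hinf := infDist_le_dist_of_mem (x := x₀) hx
  rw [dist_comm] at hfh hinf
  linarith [hh.2]

lemma lt_sq_div_four_of_two_mul_sqrt_lt {c g₀ : ℝ} (hc : 2 * √g₀ < c) : g₀ < c ^ 2 / 4 := by
  have hc₀ : 0 < c / 2 := by linarith [sqrt_nonneg g₀]
  calc g₀ < (c / 2) ^ 2 := (sqrt_lt' hc₀).1 (by linarith)
    _ = c ^ 2 / 4 := by ring

theorem decay_rate_implicit_function_general
    (a : ℕ → ℝ) (C ρ : ℝ) (hρ : ρ ∈ Set.Ioo (0 : ℝ) 1)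
    (ha : ∀ k : ℕ, 1 ≤ k → |a k| ≤ C * ρ ^ k)
    (hsum : ∑' k : ℕ, a (k + 1) = 1)
    (c g₀ : ℝ) (hc : c > 2 * Real.sqrt g₀) :
    let κ₀ := c / 2 - Real.sqrt (c ^ 2 / 4 - g₀)
    let G0 : ℝ → ℝ := fun κ => g₀ - c * κ + κ ^ 2
    let G : ℝ → ℝ → ℝ := fun h κ => g₀ - c * κ + ∑' k : ℕ, a (k + 1) *
        (Real.exp (-κ * ((k + 1) * h)) - 2 + Real.exp (κ * ((k + 1) * h)))
          / (((k : ℝ) + 1) ^ 2 * h ^ 2)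
    G0 κ₀ = 0 ∧ deriv G0 κ₀ = 2 * κ₀ - c ∧ 2 * κ₀ - c < 0 ∧
      ∃ h₀ > 0, ∃ κf : ℝ → ℝ,
        (∀ h ∈ Set.Ioo (0 : ℝ) h₀, G h (κf h) = 0) ∧
        Tendsto κf (nhdsWithin 0 (Set.Ioi 0)) (nhds κ₀) := by
  intro κ₀ G0 G
  have hg₀ := lt_sq_div_four_of_two_mul_sqrt_lt hc
  have hr : 0 < √(c ^ 2 / 4 - g₀) := sqrt_pos.2 (by linarith)
  have hr2 : √(c ^ 2 / 4 - g₀) ^ 2 = c ^ 2 / 4 - g₀ := sq_sqrt (by linarith)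
  have hroots (ε : ℝ) (hε : 0 < ε) : ∀ᶠ h in 𝓝[>] 0, ∃ κ ∈ {κ | G h κ = 0}, dist κ κ₀ ≤ ε :=
    (eventually_exists_zero_near_of_tendsto_sq hg₀
      (fun κ => (tendsto_tsum_secondDiffTerm ha hρ.1.le hρ.2 hsum κ).mono_left
        (nhdsGT_le_nhdsNE 0))
      (fun M => (eventually_continuousOn_tsum_secondDiffTerm ha hρ.1.le hρ.2 M).filter_mono
        (nhdsGT_le_nhdsNE 0)) hε)
  obtain ⟨h₀, hh₀, κf, hκf, hlim⟩ := exists_tendsto_of_eventually_exists_near hroots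
  have hG0 : HasDerivAt G0 (2 * κ₀ - c) κ₀ := by
    refine (((hasDerivAt_id κ₀).const_mul c).const_sub g₀ |>.add
      (hasDerivAt_pow 2 κ₀)).congr_deriv ?_
    push_cast
    ring
  refine ⟨?_, hG0.deriv, ?_, h₀, hh₀, κf, hκf, hlim⟩
  · show g₀ - c * κ₀ + κ₀ ^ 2 = 0
    linear_combination hr2
  · show 2 * (c / 2 - √(c ^ 2 / 4 - g₀)) - c < 0
    linarith

theorem decay_rate_implicit_function
    (a : ℕ → ℝ) (C ρ : ℝ) (hC : 0 < C) (hρ : ρ ∈ Set.Ioo (0 : ℝ) 1)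
    (ha : ∀ k : ℕ, 1 ≤ k → |a k| ≤ C * ρ ^ k)
    (hsum : ∑' k : ℕ, a (k + 1) = 1)
    (c g₀ : ℝ) (hg : 0 < g₀) (hc : c > 2 * Real.sqrt g₀) :
    let κ₀ := c / 2 - Real.sqrt (c ^ 2 / 4 - g₀)
    let G0 : ℝ → ℝ := fun κ => g₀ - c * κ + κ ^ 2
    let G : ℝ → ℝ → ℝ := fun h κ => g₀ - c * κ + ∑' k : ℕ, a (k + 1) *
        (Real.exp (-κ * ((k + 1) * h)) - 2 + Real.exp (κ * ((k + 1) * h)))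
          / (((k : ℝ) + 1) ^ 2 * h ^ 2)
    G0 κ₀ = 0 ∧ deriv G0 κ₀ = 2 * κ₀ - c ∧ 2 * κ₀ - c < 0 ∧
      ∃ h₀ > 0, ∃ κf : ℝ → ℝ,
        (∀ h ∈ Set.Ioo (0 : ℝ) h₀, G h (κf h) = 0) ∧
        Tendsto κf (nhdsWithin 0 (Set.Ioi 0)) (nhds κ₀) :=
  decay_rate_implicit_function_general a C ρ hρ ha hsum c g₀ hc
end
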